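/- arXiv:0901.2754 — 2 statements merged into one kernel-verified Lean document; each statement's English description precedes it below -/
import Mathlib

section
/- Let B = B(c, r) ⊆ ℝ^m be an open ball and ω a unit vector, so h_B(ω) = c·ω + r. Then there exist μ ∈ ℝ, C > 0, and τ₀ > 0 such that for all τ > τ₀, ∫_B exp(2√τ x·ω) dx ≥ C τ^{-μ} exp(2√τ h_B(ω)). (One may take μ = (m+1)/2.) -/
open Real MeasureTheory Metric
open scoped RealInnerProductSpace

/-- lower bound C τ^{-μ} e^{2√τ h_B(ω)} for ∫_B exp(2√τ x·ω) dx. -/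
theorem stmt2 (m : ℕ) (hm : 1 ≤ m) (c : EuclideanSpace ℝ (Fin m)) (r : ℝ) (hr : 0 < r)
    (ω : EuclideanSpace ℝ (Fin m)) (hω : ‖ω‖ = 1) :
    ∃ μ : ℝ, ∃ C > (0:ℝ), ∃ τ₀ > (0:ℝ), μ = (m + 1) / 2 ∧
      ∀ τ > τ₀,
        C * τ ^ (-μ) * Real.exp (2 * Real.sqrt τ * (⟪c, ω⟫ + r))
          ≤ ∫ x in Metric.ball c r, Real.exp (2 * Real.sqrt τ * ⟪x, ω⟫) := by
  have hm' : Nontrivial (EuclideanSpace ℝ (Fin m)) := by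
    have : 0 < m := hm
    exact ⟨⟨ω, 0, by intro h; rw [h, norm_zero] at hω; norm_num at hω⟩⟩
  set v : ℝ := (volume (Metric.ball (0 : EuclideanSpace ℝ (Fin m)) 1)).toReal with hv_def
  have hv : 0 < v := by
    apply ENNReal.toReal_pos
    · exact (measure_ball_pos volume 0 one_pos).ne'
    · exact (measure_ball_lt_top).ne
  refine ⟨(m + 1) / 2, v * Real.exp (-4), by positivity, max 1 (1 / r ^ 2),
    lt_max_of_lt_left one_pos, rfl, ?_⟩
  intro τ hτ
  have hτ1 : (1 : ℝ) < τ := lt_of_le_of_lt (le_max_left _ _) hτ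
  have hτ0 : (0 : ℝ) < τ := lt_trans one_pos hτ1
  set ρ : ℝ := τ ^ (-(1/2) : ℝ) with hρ_def
  have hρ0 : 0 < ρ := Real.rpow_pos_of_pos hτ0 _
  have hρ_inv : ρ = 1 / Real.sqrt τ := by
    rw [hρ_def, Real.rpow_neg hτ0.le, ← Real.sqrt_eq_rpow, one_div]
  have hρr : ρ < r := by
    have h2 : 1 / r ^ 2 < τ := lt_of_le_of_lt (le_max_right _ _) hτ
    rw [hρ_inv, div_lt_iff₀ (Real.sqrt_pos.mpr hτ0)]
    have hs : Real.sqrt (1 / r ^ 2) < Real.sqrt τ := Real.sqrt_lt_sqrt (by positivity) h2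
    rw [one_div, Real.sqrt_inv, Real.sqrt_sq hr.le] at hs
    calc 1 = r * r⁻¹ := (mul_inv_cancel₀ hr.ne').symm
      _ < r * Real.sqrt τ := by exact mul_lt_mul_of_pos_left hs hr
  set p : EuclideanSpace ℝ (Fin m) := c + (r - ρ) • ω with hp_def
  -- small ball inside big ball
  have hsub : Metric.ball p ρ ⊆ Metric.ball c r := by
    intro x hx
    rw [mem_ball, dist_eq_norm] at hx ⊢
    have hxc : x - c = (x - p) + (r - ρ) • ω := by rw [hp_def]; abel
    calc ‖x - c‖ = ‖(x - p) + (r - ρ) • ω‖ := by rw [hxc]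
      _ ≤ ‖x - p‖ + ‖(r - ρ) • ω‖ := norm_add_le _ _
      _ < ρ + (r - ρ) := by
          apply add_lt_add_of_lt_of_le hx
          rw [norm_smul, hω, mul_one, Real.norm_eq_abs, abs_of_nonneg (by linarith)]
      _ = r := by ring
  -- inner product lower bound on small ball
  have hinner : ∀ x ∈ Metric.ball p ρ, ⟪c, ω⟫ + r - 2 * ρ ≤ ⟪x, ω⟫ := by
    intro x hx
    rw [mem_ball, dist_eq_norm] at hx
    have h1 : ⟪p, ω⟫ = ⟪c, ω⟫ + (r - ρ) := by
      rw [hp_def, inner_add_left, real_inner_smul_left, real_inner_self_eq_norm_sq, hω]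
      ring
    have h2 : -‖x - p‖ ≤ ⟪x - p, ω⟫ := by
      have := abs_real_inner_le_norm (x - p) ω
      rw [hω, mul_one] at this
      linarith [abs_le.mp this]
    have h3 : ⟪x, ω⟫ = ⟪x - p, ω⟫ + ⟪p, ω⟫ := by
      rw [inner_sub_left]; ring
    linarith
  -- continuity and integrability
  have hcont : Continuous fun x : EuclideanSpace ℝ (Fin m) =>
      Real.exp (2 * Real.sqrt τ * ⟪x, ω⟫) :=
    Real.continuous_exp.comp (continuous_const.mul (continuous_id.inner continuous_const))
  have hint : IntegrableOn (fun x => Real.exp (2 * Real.sqrt τ * ⟪x, ω⟫))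
      (Metric.ball c r) volume :=
    (hcont.continuousOn.integrableOn_compact (isCompact_closedBall c r)).mono_set
      Metric.ball_subset_closedBall
  have hballmeas : (volume (Metric.ball p ρ)).toReal = ρ ^ m * v := by
    rw [Measure.addHaar_ball volume p hρ0.le, finrank_euclideanSpace_fin,
      ENNReal.toReal_mul, ENNReal.toReal_ofReal (by positivity)]
  have key : Real.exp (2 * Real.sqrt τ * (⟪c, ω⟫ + r - 2 * ρ)) * (volume (Metric.ball p ρ)).toReal
      ≤ ∫ x in Metric.ball c r, Real.exp (2 * Real.sqrt τ * ⟪x, ω⟫) := by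
    have h1 := setIntegral_ge_of_const_le_real (μ := volume)
      (f := fun x => Real.exp (2 * Real.sqrt τ * ⟪x, ω⟫))
      measurableSet_ball (measure_ball_lt_top).ne
      (fun x hx => Real.exp_le_exp.mpr
        (mul_le_mul_of_nonneg_left (hinner x hx) (by positivity)))
      (hint.mono_set hsub)
    refine le_trans h1 (setIntegral_mono_set hint ?_ (HasSubset.Subset.eventuallyLE hsub))
    filter_upwards with x using (Real.exp_pos _).le
  have hsτ : Real.sqrt τ * ρ = 1 := by
    rw [hρ_inv, mul_one_div, div_self (Real.sqrt_pos.mpr hτ0).ne']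
  have hexp : Real.exp (-4) * Real.exp (2 * Real.sqrt τ * (⟪c, ω⟫ + r))
      = Real.exp (2 * Real.sqrt τ * (⟪c, ω⟫ + r - 2 * ρ)) := by
    rw [← Real.exp_add]
    congr 1
    have h : 2 * Real.sqrt τ * (⟪c, ω⟫ + r - 2 * ρ)
        = 2 * Real.sqrt τ * (⟪c, ω⟫ + r) - 4 * (Real.sqrt τ * ρ) := by ring
    rw [h, hsτ]; ring
  have hrpow : τ ^ (-(((m : ℝ) + 1) / 2)) ≤ ρ ^ m := by
    have h1 : τ ^ (-(((m : ℝ) + 1) / 2)) ≤ τ ^ (-((m : ℝ) / 2)) :=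
      Real.rpow_le_rpow_of_exponent_le hτ1.le (by linarith)
    have h2 : ρ ^ m = τ ^ (-((m : ℝ) / 2)) := by
      rw [hρ_def, ← Real.rpow_natCast (τ ^ (-(1 / 2) : ℝ)) m, ← Real.rpow_mul hτ0.le]
      ring_nf
    linarith
  calc v * Real.exp (-4) * τ ^ (-(((m : ℝ) + 1) / 2)) * Real.exp (2 * Real.sqrt τ * (⟪c, ω⟫ + r))
      ≤ v * Real.exp (-4) * ρ ^ m * Real.exp (2 * Real.sqrt τ * (⟪c, ω⟫ + r)) := by
        apply mul_le_mul_of_nonneg_right _ (Real.exp_pos _).le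
        exact mul_le_mul_of_nonneg_left hrpow (by positivity)
    _ = Real.exp (2 * Real.sqrt τ * (⟪c, ω⟫ + r - 2 * ρ)) * (ρ ^ m * v) := by
        rw [← hexp]; ring
    _ = Real.exp (2 * Real.sqrt τ * (⟪c, ω⟫ + r - 2 * ρ)) * (volume (Metric.ball p ρ)).toReal := by
        rw [hballmeas]
    _ ≤ _ := key
end

section
/- Let B = B(c, r) ⊆ ℝ^m be an open ball and p ∉ closure(B), and let d = |c−p| − r be the distance from p to B. Then there exists μ ∈ ℝ such that liminf_{τ→∞} τ^μ e^{2√τ d} ∫_B e^{-2√τ |x−p|} dx > 0. -/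
open Real Filter MeasureTheory Set

lemma aux_int_abs {a : ℝ} (ha : 0 < a) (r : ℝ) :
    Integrable (fun t : ℝ => rexp (-(a * |t - r|))) ∧
    (∫ t : ℝ, rexp (-(a * |t - r|))) = 2 / a := by
  have hbase : Integrable (fun t : ℝ => rexp (-(a * |t|))) := by
    have h1 : IntegrableOn (fun t : ℝ => rexp (-(a * |t|))) (Ici 0) := by
      rw [integrableOn_Ici_iff_integrableOn_Ioi]
      exact (exp_neg_integrableOn_Ioi 0 ha).congr_fun
        (fun t ht => by rw [abs_of_pos ht]; ring_nf) measurableSet_Ioi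
    have hneg : MeasurePreserving (fun t : ℝ => -t) (volume : Measure ℝ) volume :=
      Measure.measurePreserving_neg _
    have h2 : IntegrableOn (fun t : ℝ => rexp (-(a * |t|))) (Iio 0) := by
      have h := hneg.integrableOn_comp_preimage
        (Homeomorph.neg ℝ).toMeasurableEquiv.measurableEmbedding
        (f := fun t : ℝ => rexp (-(a * |t|))) (s := Iio 0)
      rw [show ((fun t : ℝ => -t) ⁻¹' Iio 0) = Ioi 0 from by ext t; simp,
        show ((fun t : ℝ => rexp (-(a * |t|))) ∘ fun t : ℝ => -t)
          = fun t : ℝ => rexp (-(a * |t|)) from funext fun t => by simp [abs_neg]] at h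
      exact h.mp (h1.mono_set Ioi_subset_Ici_self)
    have : IntegrableOn (fun t : ℝ => rexp (-(a * |t|))) (Iio 0 ∪ Ici 0) := h2.union h1
    rwa [Iio_union_Ici, integrableOn_univ] at this
  constructor
  · exact hbase.comp_sub_right r
  · have h1 : (∫ t : ℝ, rexp (-(a * |t - r|))) = ∫ t : ℝ, rexp (-(a * |t|)) :=
      integral_sub_right_eq_self (fun t : ℝ => rexp (-(a * |t|))) r
    have h2 : (∫ t : ℝ, rexp (-(a * |t|))) = 2 * ∫ t in Ioi (0:ℝ), rexp (-(a * t)) :=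
      integral_comp_abs (f := fun t : ℝ => rexp (-(a * t)))
    have h3 : (∫ t in Ioi (0:ℝ), rexp (-(a * t))) = a⁻¹ := by
      have := integral_comp_mul_left_Ioi (fun x : ℝ => rexp (-x)) 0 ha
      rw [mul_zero, integral_exp_neg_Ioi, neg_zero, Real.exp_zero, smul_eq_mul, mul_one] at this
      exact this
    rw [h1, h2, h3]
    ring

lemma aux_lt_of_sq {t S r : ℝ} (hr : 0 < r) (hS : 0 ≤ S) (h : t ^ 2 + S < r ^ 2) : t < r := by
  nlinarith

lemma aux_le_of_sq_le_sq {A np : ℝ} (hnp : 0 ≤ np) (hA : 0 ≤ A) (h : A ^ 2 ≤ np ^ 2) :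
    A ≤ np := by nlinarith

set_option maxHeartbeats 1000000 in
/-- for a ball B = B(c,r) and p with |c−p| > r, d = |c−p| − r, there is μ with
liminf_{τ→∞} τ^μ e^{2√τ d} ∫_B e^{-2√τ|x−p|} dx > 0. -/
theorem stmt9 (m : ℕ) (hm : 1 ≤ m) (c p : EuclideanSpace ℝ (Fin m)) (r : ℝ) (hr : 0 < r)
    (hp : r < ‖c - p‖) (d : ℝ) (hd : d = ‖c - p‖ - r) :
    ∃ μ : ℝ,
      0 < Filter.liminf (fun τ : ℝ =>
        τ ^ μ * Real.exp (2 * Real.sqrt τ * d) *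
          ∫ x in Metric.ball c r, Real.exp (-2 * Real.sqrt τ * ‖x - p‖)) atTop := by
  classical
  obtain ⟨n, rfl⟩ : ∃ n, m = n + 1 := ⟨m - 1, (Nat.succ_pred_eq_of_pos hm).symm⟩
  set L : ℝ := ‖c - p‖ with hL
  have hL0 : 0 < L := hr.trans hp
  have hd0 : 0 < d := by rw [hd]; linarith
  have hdL : d = L - r := hd
  set u : EuclideanSpace ℝ (Fin (n+1)) := L⁻¹ • (p - c) with hu
  have hu1 : ‖u‖ = 1 := by
    rw [hu, norm_smul, norm_inv, Real.norm_eq_abs, abs_of_pos hL0, ← norm_neg (p - c)]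
    simp only [neg_sub]
    exact inv_mul_cancel₀ hL0.ne'
  have hpc : p - c = L • u := by
    rw [hu, smul_smul, mul_inv_cancel₀ hL0.ne', one_smul]
  set i0 : Fin (n + 1) := 0 with hi0
  -- orthonormal basis with b i0 = u
  have hcard : Module.finrank ℝ (EuclideanSpace ℝ (Fin (n+1))) = Fintype.card (Fin (n + 1)) := by
    simp [finrank_euclideanSpace]
  have horto : Orthonormal ℝ ((({i0} : Set (Fin (n+1)))).restrict (fun _ => u)) := by
    constructor
    · intro i; exact hu1
    · intro i j hij
      exact absurd (Subtype.ext (by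
        have h1 : (i : Fin (n+1)) = i0 := i.2
        have h2 : (j : Fin (n+1)) = i0 := j.2
        rw [h1, h2])) hij
  obtain ⟨b, hb⟩ := horto.exists_orthonormalBasis_extension_of_card_eq hcard
  have hb0 : b i0 = u := hb i0 rfl
  set K : ℝ := 2 * d + 2 * r with hK
  have hK0 : 0 < K := by positivity
  -- coordinates
  set Y : EuclideanSpace ℝ (Fin (n+1)) → Fin (n+1) → ℝ := fun x i => b.repr (x - c) i with hY
  have hnormsq : ∀ w : EuclideanSpace ℝ (Fin (n+1)), ‖w‖ ^ 2 = ∑ i, (b.repr w i) ^ 2 := by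
    intro w
    rw [← b.repr.norm_map w, EuclideanSpace.norm_eq,
      Real.sq_sqrt (by positivity)]
    congr 1; ext i; rw [Real.norm_eq_abs, sq_abs]
  have hrepr_p : ∀ x : EuclideanSpace ℝ (Fin (n+1)), ∀ i, b.repr (x - p) i
      = Y x i - L * (EuclideanSpace.single i0 (1:ℝ)) i := by
    intro x i
    have hx : x - p = (x - c) - L • u := by rw [← hpc]; abel
    rw [hx, map_sub, LinearIsometryEquiv.map_smul, ← hb0, b.repr_self]
    simp [hY]
  have hyc : ∀ x : EuclideanSpace ℝ (Fin (n+1)), ‖x - c‖ ^ 2 = (Y x i0) ^ 2 + ∑ i ∈ Finset.univ.erase i0, (Y x i) ^ 2 := by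
    intro x
    rw [hnormsq (x - c), ← Finset.add_sum_erase Finset.univ _ (Finset.mem_univ i0)]
  have hyp : ∀ x : EuclideanSpace ℝ (Fin (n+1)), ‖x - p‖ ^ 2
      = (Y x i0 - L) ^ 2 + ∑ i ∈ Finset.univ.erase i0, (Y x i) ^ 2 := by
    intro x
    rw [hnormsq (x - p), ← Finset.add_sum_erase Finset.univ _ (Finset.mem_univ i0)]
    congr 1
    · rw [hrepr_p x i0, EuclideanSpace.single_apply, if_pos rfl, mul_one]
    · refine Finset.sum_congr rfl fun i hi => ?_
      rw [hrepr_p x i, EuclideanSpace.single_apply, if_neg (Finset.ne_of_mem_erase hi),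
        mul_zero, sub_zero]
  -- the measurable equivalence to the pi space
  set Teq : EuclideanSpace ℝ (Fin (n+1)) ≃ᵐ (Fin (n+1) → ℝ) :=
    ((Homeomorph.subRight c).toMeasurableEquiv.trans
      (b.measurableEquiv.trans (MeasurableEquiv.toLp 2 (Fin (n+1) → ℝ)).symm)) with hTeq
  have hT : MeasurePreserving Teq (volume : Measure (EuclideanSpace ℝ (Fin (n+1)))) (volume : Measure (Fin (n+1) → ℝ)) := by
    exact ((EuclideanSpace.volume_preserving_symm_measurableEquiv_toLp (Fin (n+1))).comp
      b.measurePreserving_measurableEquiv).comp (measurePreserving_sub_right volume c)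
  have hTx : ∀ (x : EuclideanSpace ℝ (Fin (n+1))) (i : Fin (n+1)), Teq x i = Y x i := fun x i => rfl
  clear_value Teq
  clear hTeq
  -- the constants
  set ε : ℝ := rexp (-(4 + r / d)) * (2 * Real.sqrt r / (n + 1 : ℝ)) ^ n with hε
  have hεpos : 0 < ε := by positivity
  set M : ℝ := 2 * (Real.sqrt (π * K)) ^ n with hM
  refine ⟨((n : ℝ) + 2) / 4, ?_⟩
  set F : ℝ → ℝ := fun τ =>
    τ ^ (((n:ℝ) + 2) / 4) * rexp (2 * Real.sqrt τ * d) *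
      ∫ x in Metric.ball c r, rexp (-2 * Real.sqrt τ * ‖x - p‖) with hF
  have hev : ∀ᶠ τ in atTop, ε ≤ F τ ∧ F τ ≤ M := by
    filter_upwards [eventually_ge_atTop (max 1 ((2/r)^2))] with τ hτ
    have hτ1 : (1:ℝ) ≤ τ := le_trans (le_max_left _ _) hτ
    have hτ0 : (0:ℝ) < τ := lt_of_lt_of_le one_pos hτ1
    set a : ℝ := Real.sqrt τ with ha'
    have ha1 : (1:ℝ) ≤ a := by
      rw [ha', show (1:ℝ) = Real.sqrt 1 by simp]; exact Real.sqrt_le_sqrt hτ1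
    have ha : 0 < a := lt_of_lt_of_le one_pos ha1
    have har : 2 / r ≤ a := by
      have := Real.sqrt_le_sqrt (le_trans (le_max_right _ _) hτ)
      rwa [Real.sqrt_sq (by positivity)] at this
    set s : ℝ := a⁻¹ with hs'
    have hs : 0 < s := inv_pos.mpr ha
    have has : a * s = 1 := mul_inv_cancel₀ ha.ne'
    have hs2 : 2 * s ≤ r := by
      rw [hs']
      rw [div_le_iff₀ hr] at har
      calc 2 * a⁻¹ = 2 / a := by ring
        _ ≤ r := by rw [div_le_iff₀ ha]; linarith [mul_comm r a]
    set q : ℝ := Real.sqrt a with hq'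
    have hq : 0 < q := Real.sqrt_pos.mpr ha
    have hq2 : q ^ 2 = a := Real.sq_sqrt ha.le
    have hq4 : τ = q ^ 4 := by
      have : q ^ 4 = (q ^ 2) ^ 2 := by ring
      rw [this, hq2, ha', Real.sq_sqrt hτ0.le]
    have hqs : Real.sqrt s = q⁻¹ := by rw [hs', Real.sqrt_inv, hq']
    set β : ℝ := Real.sqrt (r * s) / (n + 1 : ℝ) with hβ'
    have hβ : 0 < β := by
      rw [hβ']
      exact div_pos (Real.sqrt_pos.mpr (by positivity)) (by positivity)
    have hqβ : q * β = Real.sqrt r / (n + 1 : ℝ) := by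
      rw [hβ', Real.sqrt_mul hr.le, hqs]
      field_simp
    -- per-point geometry on the ball
    have hgeo : ∀ x ∈ Metric.ball c r,
        Y x i0 < r ∧ d ≤ ‖x - p‖ ∧ r - Y x i0 ≤ ‖x - p‖ - d ∧
        (∑ i ∈ Finset.univ.erase i0, (Y x i) ^ 2) ≤ (‖x - p‖ - d) * K := by
      intro x hx
      have hxc : ‖x - c‖ < r := by rwa [Metric.mem_ball, dist_eq_norm] at hx
      have hxc2 : ‖x - c‖ ^ 2 < r ^ 2 := by
        exact pow_lt_pow_left₀ hxc (norm_nonneg _) (by norm_num)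
      set t : ℝ := Y x i0
      set S : ℝ := ∑ i ∈ Finset.univ.erase i0, (Y x i) ^ 2 with hS
      have hS0 : 0 ≤ S := Finset.sum_nonneg fun i _ => sq_nonneg _
      have hc2 := hyc x
      have hp2 := hyp x
      have ht : t < r := aux_lt_of_sq hr hS0 (by rw [← hc2]; exact hxc2)
      have hnp0 : 0 ≤ ‖x - p‖ := norm_nonneg _
      have htd : d ≤ L - t := by rw [hdL]; linarith
      have hlow : L - t ≤ ‖x - p‖ := by
        refine aux_le_of_sq_le_sq hnp0 (by linarith) ?_
        have e1 : (L - t) ^ 2 = (t - L) ^ 2 := by ring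
        rw [e1, hp2]; linarith
      have hd_le : d ≤ ‖x - p‖ := by rw [hdL]; linarith
      have hup : ‖x - p‖ ≤ ‖x - c‖ + L := by
        calc ‖x - p‖ = ‖(x - c) + (c - p)‖ := by abel_nf
          _ ≤ ‖x - c‖ + ‖c - p‖ := norm_add_le _ _
      have hh2r : ‖x - p‖ - d ≤ 2 * r := by rw [hdL]; linarith
      refine ⟨ht, hd_le, by rw [hdL]; linarith, ?_⟩
      have key : S ≤ (‖x - p‖ - d) * (‖x - p‖ + d) := by
        have e1 : (t - L) ^ 2 = (L - t) ^ 2 := by ring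
        have e2 : (‖x - p‖ - d) * (‖x - p‖ + d) = ‖x - p‖ ^ 2 - d ^ 2 := by ring
        have e3 : d ^ 2 ≤ (L - t) ^ 2 := pow_le_pow_left₀ hd0.le htd 2
        rw [e2]
        rw [e1] at hp2
        linarith
      refine le_trans key ?_
      have h2 : ‖x - p‖ + d ≤ K := by rw [hK]; linarith
      exact mul_le_mul_of_nonneg_left h2 (sub_nonneg.mpr hd_le)
    -- product structure
    set g : Fin (n+1) → ℝ → ℝ := fun i t =>
      if i = i0 then rexp (-(a * |t - r|)) else rexp (-(a / K) * t ^ 2) with hg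
    have hgint : ∀ i, Integrable (g i) := by
      intro i
      by_cases hii : i = i0
      · simpa [hg, hii] using (aux_int_abs ha r).1
      · simpa [hg, hii] using integrable_exp_neg_mul_sq (div_pos ha hK0)
    have hgnn : ∀ i t, 0 ≤ g i t := by
      intro i t; by_cases hii : i = i0 <;> simp [hg, hii, Real.exp_nonneg]
    set P : (Fin (n+1) → ℝ) → ℝ := fun y => ∏ i, g i (y i) with hP
    have hPint : Integrable P := Integrable.fintype_prod hgint
    have hPnn : ∀ y, 0 ≤ P y := fun y => Finset.prod_nonneg fun i _ => hgnn i _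
    have hPhint : Integrable (fun x : EuclideanSpace ℝ (Fin (n+1)) => P (Teq x)) :=
      (hT.integrable_comp_emb Teq.measurableEmbedding).mpr hPint
    have hJ : (∫ x : EuclideanSpace ℝ (Fin (n+1)), P (Teq x)) = ∫ y, P y :=
      hT.integral_comp Teq.measurableEmbedding P
    set G : ℝ := Real.sqrt (π / (a / K)) with hG'
    have hfub : (∫ y, P y) = ∏ i, ∫ t, g i t := by
      rw [hP]; exact integral_fintype_prod_eq_prod g
    have hprod : (∏ i, ∫ t, g i t) = (2 / a) * G ^ n := by
      rw [← Finset.mul_prod_erase Finset.univ _ (Finset.mem_univ i0)]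
      have h0 : (∫ t, g i0 t) = 2 / a := by
        simp only [hg, if_pos rfl]
        exact (aux_int_abs ha r).2
      have h1 : ∀ i ∈ Finset.univ.erase i0, (∫ t, g i t) = G := by
        intro i hi
        simp only [hg, if_neg (Finset.ne_of_mem_erase hi)]
        rw [hG']
        exact integral_gaussian (a / K)
      rw [h0, Finset.prod_congr rfl h1, Finset.prod_const,
        Finset.card_erase_of_mem (Finset.mem_univ i0), Finset.card_univ, Fintype.card_fin]
      norm_num
    -- pointwise upper bound on the ball
    have hpt : ∀ x ∈ Metric.ball c r,
        rexp (-2 * a * ‖x - p‖) ≤ rexp (-(2 * a * d)) * P (Teq x) := by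
      intro x hx
      obtain ⟨ht, hd_le, hrt, hSK⟩ := hgeo x hx
      have hS0 : (0:ℝ) ≤ ∑ i ∈ Finset.univ.erase i0, (Y x i) ^ 2 :=
        Finset.sum_nonneg fun i _ => sq_nonneg _
      have hPx : P (Teq x) = rexp (-(a * |Y x i0 - r|)) *
          rexp (-(a / K) * ∑ i ∈ Finset.univ.erase i0, (Y x i) ^ 2) := by
        rw [hP]
        simp only [hTx]
        rw [← Finset.mul_prod_erase Finset.univ _ (Finset.mem_univ i0)]
        have e0 : g i0 (Y x i0) = rexp (-(a * |Y x i0 - r|)) := by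
          simp [hg]
        have e1 : (∏ i ∈ Finset.univ.erase i0, g i (Y x i))
            = rexp (-(a / K) * ∑ i ∈ Finset.univ.erase i0, (Y x i) ^ 2) := by
          calc (∏ i ∈ Finset.univ.erase i0, g i (Y x i))
              = ∏ i ∈ Finset.univ.erase i0, rexp (-(a / K) * (Y x i) ^ 2) :=
                Finset.prod_congr rfl fun i hi => by
                  simp only [hg]; rw [if_neg (Finset.ne_of_mem_erase hi)]
            _ = rexp (∑ i ∈ Finset.univ.erase i0, -(a / K) * (Y x i) ^ 2) :=
                (Real.exp_sum _ _).symm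
            _ = rexp (-(a / K) * ∑ i ∈ Finset.univ.erase i0, (Y x i) ^ 2) := by
                rw [Finset.mul_sum]
        rw [e0, e1]
      have habs : |Y x i0 - r| = r - Y x i0 := by
        rw [abs_of_nonpos (by linarith), neg_sub]
      rw [hPx, habs, ← Real.exp_add, ← Real.exp_add]
      apply Real.exp_le_exp.mpr
      have h1 : a * (r - Y x i0) ≤ a * (‖x - p‖ - d) :=
        mul_le_mul_of_nonneg_left hrt ha.le
      have h2 : a / K * (∑ i ∈ Finset.univ.erase i0, (Y x i) ^ 2)
          ≤ a / K * ((‖x - p‖ - d) * K) :=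
        mul_le_mul_of_nonneg_left hSK (by positivity)
      have h2e : a / K * ((‖x - p‖ - d) * K) = a * ‖x - p‖ - a * d := by
        field_simp
      linarith [h1, h2, h2e]
    -- integrability of the integrand on the ball
    have hIint : IntegrableOn (fun x : EuclideanSpace ℝ (Fin (n+1)) =>
        rexp (-2 * a * ‖x - p‖)) (Metric.ball c r) := by
      refine Measure.integrableOn_of_bounded measure_ball_lt_top.ne
        ((by fun_prop : Continuous fun x : EuclideanSpace ℝ (Fin (n+1)) =>
          rexp (-2 * a * ‖x - p‖)).aestronglyMeasurable) (M := 1) ?_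
      filter_upwards with x
      rw [Real.norm_eq_abs, abs_of_pos (Real.exp_pos _)]
      refine Real.exp_le_one_iff.mpr ?_
      exact mul_nonpos_of_nonpos_of_nonneg (by linarith) (norm_nonneg _)
    -- upper bound on the integral
    have hIup : (∫ x in Metric.ball c r, rexp (-2 * a * ‖x - p‖))
        ≤ rexp (-(2 * a * d)) * ((2 / a) * G ^ n) := by
      calc (∫ x in Metric.ball c r, rexp (-2 * a * ‖x - p‖))
          ≤ ∫ x in Metric.ball c r, rexp (-(2 * a * d)) * P (Teq x) :=
            setIntegral_mono_on hIint ((hPhint.const_mul _).integrableOn)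
              measurableSet_ball hpt
        _ ≤ ∫ x, rexp (-(2 * a * d)) * P (Teq x) := by
            refine setIntegral_le_integral (hPhint.const_mul _) ?_
            filter_upwards with x
            exact mul_nonneg (Real.exp_nonneg _) (hPnn _)
        _ = rexp (-(2 * a * d)) * ((2 / a) * G ^ n) := by
            rw [integral_const_mul, hJ, hfub, hprod]
    -- the lower-bound region
    set Iset : Set (Fin (n+1) → ℝ) := Set.univ.pi (fun i =>
      if i = i0 then Icc (r - 2*s) (r - s) else Icc (-β) β) with hIset
    have hImeas : MeasurableSet Iset := MeasurableSet.univ_pi fun i => by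
      by_cases hii : i = i0 <;> simp [hii, measurableSet_Icc]
    set R : Set (EuclideanSpace ℝ (Fin (n+1))) := Teq ⁻¹' Iset with hR
    have hRmeas : MeasurableSet R := Teq.measurable hImeas
    have hIvol : volume Iset = ENNReal.ofReal (s * (2*β)^n) := by
      rw [hIset, volume_pi_pi]
      rw [← Finset.mul_prod_erase Finset.univ _ (Finset.mem_univ i0)]
      have h0 : volume (if i0 = i0 then Icc (r-2*s) (r-s) else Icc (-β) β)
          = ENNReal.ofReal s := by
        rw [if_pos rfl, Real.volume_Icc]; congr 1; ring
      have h1 : ∀ i ∈ Finset.univ.erase i0,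
          volume (if i = i0 then Icc (r-2*s) (r-s) else Icc (-β) β)
          = ENNReal.ofReal (2*β) := by
        intro i hi
        rw [if_neg (Finset.ne_of_mem_erase hi), Real.volume_Icc]; congr 1; ring
      rw [h0, Finset.prod_congr rfl h1, Finset.prod_const,
        Finset.card_erase_of_mem (Finset.mem_univ i0), Finset.card_univ, Fintype.card_fin]
      norm_num
      rw [← ENNReal.ofReal_ofNat 2, ← ENNReal.ofReal_mul (by norm_num), ← ENNReal.ofReal_pow (by positivity), ← ENNReal.ofReal_mul hs.le]
    have hRvol : volume R = ENNReal.ofReal (s * (2*β)^n) := by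
      rw [hR, hT.measure_preimage hImeas.nullMeasurableSet, hIvol]
    have hmemR : ∀ x ∈ R, (r - 2*s ≤ Y x i0 ∧ Y x i0 ≤ r - s) ∧
        ∀ i ∈ Finset.univ.erase i0, (Y x i)^2 ≤ β^2 := by
      intro x hx
      rw [hR, Set.mem_preimage, hIset, Set.mem_univ_pi] at hx
      constructor
      · have h := hx i0
        rw [if_pos rfl] at h
        rw [hTx x i0] at h
        exact ⟨h.1, h.2⟩
      · intro i hi
        have h := hx i
        rw [if_neg (Finset.ne_of_mem_erase hi)] at h
        rw [hTx x i] at h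
        exact sq_le_sq' h.1 h.2
    have hSbound : ∀ x ∈ R, (∑ i ∈ Finset.univ.erase i0, (Y x i)^2) ≤ r * s := by
      intro x hx
      obtain ⟨-, h2⟩ := hmemR x hx
      have hcard : (Finset.univ.erase i0).card = n := by
        rw [Finset.card_erase_of_mem (Finset.mem_univ i0), Finset.card_univ, Fintype.card_fin]
        norm_num
      calc (∑ i ∈ Finset.univ.erase i0, (Y x i)^2)
          ≤ (Finset.univ.erase i0).card • β^2 := Finset.sum_le_card_nsmul _ _ _ h2
        _ = (n:ℝ) * β^2 := by rw [hcard, nsmul_eq_mul]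
        _ ≤ r * s := by
            have hb2 : β^2 = r*s/(((n:ℝ)+1)^2) := by
              rw [hβ', div_pow, Real.sq_sqrt (by positivity)]
            have hn1 : (0:ℝ) < ((n:ℝ)+1)^2 := by positivity
            have hrs : (0:ℝ) < r * s := by positivity
            calc (n:ℝ) * β^2 = ((n:ℝ)/(((n:ℝ)+1)^2)) * (r*s) := by rw [hb2]; ring
              _ ≤ 1 * (r*s) := by
                  refine mul_le_mul_of_nonneg_right ?_ hrs.le
                  rw [div_le_one hn1]
                  nlinarith [sq_nonneg ((n:ℝ))]
              _ = r*s := one_mul _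
    have hRsub : R ⊆ Metric.ball c r := by
      intro x hx
      obtain ⟨⟨h1, h2⟩, -⟩ := hmemR x hx
      have hS := hSbound x hx
      rw [Metric.mem_ball, dist_eq_norm]
      have hsq : ‖x - c‖^2 + 0 < r^2 := by
        rw [add_zero, hyc x]
        have h3 : (0:ℝ) ≤ r - 2*s := by linarith
        have habs : |Y x i0| ≤ r - s := abs_le.mpr ⟨by linarith, h2⟩
        have ht2 : (Y x i0)^2 ≤ (r-s)^2 := by
          calc (Y x i0)^2 = |Y x i0|^2 := (sq_abs _).symm
            _ ≤ (r-s)^2 := pow_le_pow_left₀ (abs_nonneg _) habs 2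
        have hs2' : s * s < r * s := mul_lt_mul_of_pos_right (by linarith) hs
        have expand : (r-s)^2 = r^2 - 2*(r*s) + s*s := by ring
        linarith
      exact aux_lt_of_sq hr le_rfl hsq
    set W : ℝ := 2*s + r*s/(2*d) with hW'
    have hW0 : 0 < W := by rw [hW']; positivity
    have hRdist : ∀ x ∈ R, ‖x - p‖ ≤ d + W := by
      intro x hx
      obtain ⟨⟨h1, h2⟩, -⟩ := hmemR x hx
      have hS := hSbound x hx
      refine aux_le_of_sq_le_sq (by positivity) (norm_nonneg _) ?_
      rw [hyp x]
      have habs : |Y x i0 - L| ≤ d + 2*s := by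
        rw [abs_le]
        constructor
        · rw [hdL] at *; linarith
        · rw [hdL] at *; linarith
      have ht2 : (Y x i0 - L)^2 ≤ (d + 2*s)^2 := by
        calc (Y x i0 - L)^2 = |Y x i0 - L|^2 := (sq_abs _).symm
          _ ≤ (d+2*s)^2 := pow_le_pow_left₀ (abs_nonneg _) habs 2
      have expand : (d + W)^2 = (d+2*s)^2 + 2*(d+2*s)*(r*s/(2*d)) + (r*s/(2*d))^2 := by
        rw [hW']; ring
      have h4 : r*s ≤ 2*(d+2*s)*(r*s/(2*d)) := by
        have e : 2*(d+2*s)*(r*s/(2*d)) = ((d+2*s)/d) * (r*s) := by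
          field_simp
        rw [e]
        have hone : 1 ≤ (d+2*s)/d := by
          rw [le_div_iff₀ hd0]; linarith
        calc r*s = 1*(r*s) := (one_mul _).symm
          _ ≤ ((d+2*s)/d) * (r*s) := mul_le_mul_of_nonneg_right hone (by positivity)
      have h5 : (0:ℝ) ≤ (r*s/(2*d))^2 := sq_nonneg _
      refine le_trans (add_le_add ht2 hS) ?_
      rw [expand]
      linarith [h4, h5]
    -- lower bound on the integral
    have hIlow : rexp (-(2*a*(d + W))) * (s * (2*β)^n)
        ≤ ∫ x in Metric.ball c r, rexp (-2 * a * ‖x - p‖) := by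
      have hRfin : volume R ≠ ⊤ := by rw [hRvol]; exact ENNReal.ofReal_ne_top
      have h1 : rexp (-(2*a*(d + W))) * (volume R).toReal
          ≤ ∫ x in R, rexp (-2*a*‖x-p‖) := by
        refine le_trans (le_of_eq (by rw [smul_eq_mul, mul_comm]; rfl)) (setIntegral_ge_of_const_le (c := rexp (-(2*a*(d + W)))) hRmeas hRfin (fun x hx => ?_)
          (hIint.mono_set hRsub))
        refine Real.exp_le_exp.mpr ?_
        have hdx := hRdist x hx
        have e : (-2:ℝ)*a*‖x-p‖ = -(2*a*‖x-p‖) := by ring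
        rw [e]
        exact neg_le_neg (mul_le_mul_of_nonneg_left hdx (by positivity))
      have h2 : (volume R).toReal = s * (2*β)^n := by
        rw [hRvol, ENNReal.toReal_ofReal (by positivity)]
      rw [h2] at h1
      refine le_trans h1 (setIntegral_mono_set hIint ?_
        (HasSubset.Subset.eventuallyLE hRsub))
      filter_upwards with x using Real.exp_nonneg _
    -- the power identity
    have hpow : τ ^ (((n:ℝ) + 2) / 4) = q ^ (n + 2) := by
      rw [hq4, ← Real.rpow_natCast q 4, ← Real.rpow_mul hq.le,
        show ((4:ℕ):ℝ) * (((n:ℝ) + 2) / 4) = (n:ℝ) + 2 by push_cast; ring,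
        show ((n:ℝ) + 2) = ((n + 2 : ℕ) : ℝ) by push_cast; ring,
        Real.rpow_natCast]
    have hFτ : F τ = τ ^ (((n:ℝ) + 2) / 4) * rexp (2*a*d) *
        ∫ x in Metric.ball c r, rexp (-2 * a * ‖x - p‖) := by
      simp only [hF, ← ha']
    constructor
    · -- lower bound: ε ≤ F τ
      have heq : ε = τ ^ (((n:ℝ)+2)/4) * rexp (2*a*d) *
          (rexp (-(2*a*(d + W))) * (s * (2*β)^n)) := by
        rw [hpow, hε]
        have hexp : rexp (2*a*d) * rexp (-(2*a*(d + W))) = rexp (-(4 + r/d)) := by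
          rw [← Real.exp_add]
          congr 1
          have e1 : 2*a*d + -(2*a*(d + W)) = -(4*(a*s) + (a*s)*(r/d)) := by
            rw [hW']; field_simp; ring
          rw [e1, has]; ring
        have hqn : q ^ (n+2) * s = q ^ n := by
          have e : q ^ (n+2) = q^n * a := by rw [pow_add, hq2]
          rw [e, mul_assoc, has, mul_one]
        have hqb : q ^ n * (2*β)^n = (2*Real.sqrt r/((n:ℝ)+1))^n := by
          rw [← mul_pow]
          congr 1
          rw [show q * (2*β) = 2*(q*β) by ring, hqβ]
          ring
        calc rexp (-(4 + r/d)) * (2*Real.sqrt r/((n:ℝ)+1))^n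
            = (q^n * (2*β)^n) * rexp (-(4 + r/d)) := by rw [hqb]; ring
          _ = ((q^(n+2) * s) * (2*β)^n) *
              (rexp (2*a*d) * rexp (-(2*a*(d + W)))) := by rw [hqn, hexp]
          _ = q^(n+2) * rexp (2*a*d) *
              (rexp (-(2*a*(d + W))) * (s * (2*β)^n)) := by ring
      rw [hFτ, heq]
      exact mul_le_mul_of_nonneg_left hIlow (by positivity)
    · -- upper bound: F τ ≤ M
      have hGq : G = Real.sqrt (π*K) * q⁻¹ := by
        rw [hG', show π/(a/K) = (π*K) * a⁻¹ by field_simp,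
          Real.sqrt_mul (by positivity) _, Real.sqrt_inv, ← hq']
      have hMeq : τ ^ (((n:ℝ)+2)/4) * rexp (2*a*d) *
          (rexp (-(2*a*d)) * ((2/a) * G^n)) = M := by
        rw [hpow, hM]
        have hexp2 : rexp (2*a*d) * rexp (-(2*a*d)) = 1 := by
          rw [← Real.exp_add]; simp
        have hqinv : q^(n+2) * (q⁻¹)^n * a⁻¹ = 1 := by
          rw [← hq2, pow_add]
          field_simp
          rw [one_div, ← mul_pow, mul_inv_cancel₀ hq.ne', one_pow]
        calc q^(n+2) * rexp (2*a*d) * (rexp (-(2*a*d)) * ((2/a) * G^n))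
            = (rexp (2*a*d) * rexp (-(2*a*d))) *
              (q^(n+2) * (2/a) * ((Real.sqrt (π*K))^n * (q⁻¹)^n)) := by
              rw [hGq, mul_pow]; ring
          _ = q^(n+2) * (2/a) * ((Real.sqrt (π*K))^n * (q⁻¹)^n) := by
              rw [hexp2, one_mul]
          _ = 2 * (Real.sqrt (π*K))^n * (q^(n+2) * (q⁻¹)^n * a⁻¹) := by ring
          _ = 2 * (Real.sqrt (π*K))^n := by rw [hqinv, mul_one]
      rw [hFτ]
      refine le_trans (mul_le_mul_of_nonneg_left hIup (by positivity)) (le_of_eq ?_)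
      rw [← mul_assoc] at *
      exact hMeq
  have hcob : IsCoboundedUnder (· ≥ ·) atTop F :=
    IsBoundedUnder.isCoboundedUnder_ge ⟨M, eventually_map.mpr (hev.mono fun τ h => h.2)⟩
  exact lt_of_lt_of_le hεpos (le_liminf_of_le hcob (hev.mono fun τ h => h.1))
end
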